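/- arXiv:2202.06006 — 2 statements merged into one kernel-verified Lean document; each statement's English description precedes it below -/
import Mathlib

section
/- There exist ε₀ > 0 and C > 0 (depending only on N, k, d, r, ξ₀) such that for every ε ∈ (0,ε₀), every admissible (μ,σ), every l ∈ {1,…,k} and all i, j ∈ {1,…,k} with i ≠ l and j ≠ l, one has ∫_{A_l} U_i(x)^p U_j(x) dx ≤ C ε^{Nθ/(2k)}. -/
open MeasureTheory Metric

/-- `α_N = (N(N-4)(N-2)(N+2))^((N-4)/8)`. -/
noncomputable def alphaN (N : ℕ) : ℝ :=
  ((N : ℝ) * ((N : ℝ) - 4) * ((N : ℝ) - 2) * ((N : ℝ) + 2)) ^ (((N : ℝ) - 4) / 8)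

/-- The critical exponent `p = (N+4)/(N-4)`. -/
noncomputable def pexp (N : ℕ) : ℝ := ((N : ℝ) + 4) / ((N : ℝ) - 4)

/-- The standard bubble `U_{μ,ξ}(x) = α_N (μ/(μ² + |x-ξ|²))^((N-4)/2)`. -/
noncomputable def bubble (N : ℕ) (μ : ℝ) (ξ : EuclideanSpace ℝ (Fin N))
    (x : EuclideanSpace ℝ (Fin N)) : ℝ :=
  alphaN N * (μ / (μ ^ 2 + ‖x - ξ‖ ^ 2)) ^ (((N : ℝ) - 4) / 2)

/-- `θ = 2k(N-2)/(2k(N-2)-2)`. -/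
noncomputable def theta (N k : ℕ) : ℝ :=
  (2 * (k : ℝ) * ((N : ℝ) - 2)) / (2 * (k : ℝ) * ((N : ℝ) - 2) - 2)

/-- `μ_{jε} = μ_j ε^((2j-1)θ/(2k))` (indices `j = 1, …, k`). -/
noncomputable def muScaled (N k : ℕ) (μ : ℕ → ℝ) (ε : ℝ) (j : ℕ) : ℝ :=
  μ j * ε ^ ((2 * (j : ℝ) - 1) * theta N k / (2 * (k : ℝ)))

/-- `ξ_{jε} = ξ₀ + μ_{jε} σ_j`. -/
noncomputable def xiScaled (N k : ℕ) (ξ₀ : EuclideanSpace ℝ (Fin N)) (μ : ℕ → ℝ)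
    (σ : ℕ → EuclideanSpace ℝ (Fin N)) (ε : ℝ) (j : ℕ) : EuclideanSpace ℝ (Fin N) :=
  ξ₀ + muScaled N k μ ε j • σ j

/-- `U_j = U_{μ_{jε}, ξ_{jε}}`. -/
noncomputable def Ubub (N k : ℕ) (ξ₀ : EuclideanSpace ℝ (Fin N)) (μ : ℕ → ℝ)
    (σ : ℕ → EuclideanSpace ℝ (Fin N)) (ε : ℝ) (j : ℕ)
    (x : EuclideanSpace ℝ (Fin N)) : ℝ :=
  bubble N (muScaled N k μ ε j) (xiScaled N k ξ₀ μ σ ε j) x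

/-- The annulus `A_l = B(ξ₀, √(μ_{lε}μ_{(l-1)ε})) ∖ B(ξ₀, √(μ_{lε}μ_{(l+1)ε}))`,
with the conventions `μ_{0ε}μ_{1ε} = r²` and `μ_{kε}μ_{(k+1)ε} = ε²`. -/
noncomputable def annulus (N k : ℕ) (ξ₀ : EuclideanSpace ℝ (Fin N)) (μ : ℕ → ℝ)
    (r ε : ℝ) (l : ℕ) : Set (EuclideanSpace ℝ (Fin N)) :=
  ball ξ₀ (if l = 1 then r else Real.sqrt (muScaled N k μ ε l * muScaled N k μ ε (l - 1))) \
  ball ξ₀ (if l = k then ε else Real.sqrt (muScaled N k μ ε l * muScaled N k μ ε (l + 1)))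

/-- `(μ,σ)` is admissible: `d < μ_j < 1/d` and `|σ_j| < 1/d` for `j = 1, …, k`. -/
def admissible (N k : ℕ) (d : ℝ) (μ : ℕ → ℝ) (σ : ℕ → EuclideanSpace ℝ (Fin N)) : Prop :=
  ∀ j, 1 ≤ j → j ≤ k → d < μ j ∧ μ j < 1 / d ∧ ‖σ j‖ < 1 / d

set_option maxHeartbeats 1000000

section auxlemmas
variable {N : ℕ}

lemma hN5 (hN : 5 ≤ N) : (5:ℝ) ≤ (N:ℝ) := by exact_mod_cast hN

lemma alphaN_pos (hN : 5 ≤ N) : 0 < alphaN N := by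
  have h5 := hN5 hN
  apply Real.rpow_pos_of_pos
  have h1 : (0:ℝ) < (N:ℝ) := by linarith
  have h2 : (0:ℝ) < (N:ℝ) - 4 := by linarith
  have h3 : (0:ℝ) < (N:ℝ) - 2 := by linarith
  have h4 : (0:ℝ) < (N:ℝ) + 2 := by linarith
  exact mul_pos (mul_pos (mul_pos h1 h2) h3) h4

lemma pexp_pos (hN : 5 ≤ N) : 0 < pexp N := by
  have h5 := hN5 hN
  apply div_pos <;> linarith

lemma bubble_pos (hN : 5 ≤ N) {μ : ℝ} (hμ : 0 < μ) (ξ x : EuclideanSpace ℝ (Fin N)) :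
    0 < bubble N μ ξ x := by
  apply mul_pos (alphaN_pos hN)
  apply Real.rpow_pos_of_pos
  positivity

lemma bubble_continuous {μ : ℝ} (hμ : 0 < μ) (ξ : EuclideanSpace ℝ (Fin N)) :
    Continuous (bubble N μ ξ) := by
  apply Continuous.mul continuous_const
  apply Continuous.rpow_const
  · apply Continuous.div continuous_const (by fun_prop)
    intro x; positivity
  · intro x; left; positivity

lemma bubble_rpow_q (hN : 5 ≤ N) {μ : ℝ} (hμ : 0 < μ) (ξ x : EuclideanSpace ℝ (Fin N)) :
    bubble N μ ξ x ^ (pexp N + 1)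
      = alphaN N ^ (pexp N + 1) * (μ / (μ ^ 2 + ‖x - ξ‖ ^ 2)) ^ (N:ℝ) := by
  have h5 := hN5 hN
  have hB : (0:ℝ) < μ / (μ ^ 2 + ‖x - ξ‖ ^ 2) := by positivity
  have hne : (N:ℝ) - 4 ≠ 0 := by linarith
  have hexp : ((N:ℝ) - 4) / 2 * (pexp N + 1) = (N:ℝ) := by
    rw [pexp]; field_simp; ring
  rw [bubble, Real.mul_rpow (alphaN_pos hN).le (Real.rpow_nonneg hB.le _),
    ← Real.rpow_mul hB.le, hexp]

lemma bubble_q_le_inv (hN : 5 ≤ N) {μ : ℝ} (hμ : 0 < μ) (ξ x : EuclideanSpace ℝ (Fin N)) :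
    bubble N μ ξ x ^ (pexp N + 1) ≤ alphaN N ^ (pexp N + 1) * (μ ^ (N:ℝ))⁻¹ := by
  rw [bubble_rpow_q hN hμ]
  apply mul_le_mul_of_nonneg_left _ (Real.rpow_nonneg (alphaN_pos hN).le _)
  rw [← Real.inv_rpow hμ.le]
  apply Real.rpow_le_rpow (by positivity) _ (Nat.cast_nonneg N)
  rw [div_le_iff₀ (by positivity), inv_mul_eq_div, le_div_iff₀ hμ]
  nlinarith [sq_nonneg ‖x - ξ‖]

lemma bubble_q_le_tail (hN : 5 ≤ N) {μ : ℝ} (hμ : 0 < μ) {ξ x : EuclideanSpace ℝ (Fin N)}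
    (hx : 0 < ‖x - ξ‖) :
    bubble N μ ξ x ^ (pexp N + 1)
      ≤ alphaN N ^ (pexp N + 1) * μ ^ (N:ℝ) * ‖x - ξ‖ ^ (-(2*(N:ℝ))) := by
  rw [bubble_rpow_q hN hμ, mul_assoc]
  apply mul_le_mul_of_nonneg_left _ (Real.rpow_nonneg (alphaN_pos hN).le _)
  have h1 : μ / (μ ^ 2 + ‖x - ξ‖ ^ 2) ≤ μ / ‖x - ξ‖ ^ 2 := by
    apply div_le_div_of_nonneg_left hμ.le (by positivity)
    nlinarith [sq_nonneg μ]
  calc (μ / (μ ^ 2 + ‖x - ξ‖ ^ 2)) ^ (N:ℝ) ≤ (μ / ‖x - ξ‖ ^ 2) ^ (N:ℝ) := by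
        apply Real.rpow_le_rpow (by positivity) h1 (Nat.cast_nonneg N)
    _ = μ ^ (N:ℝ) * ‖x - ξ‖ ^ (-(2*(N:ℝ))) := by
        rw [Real.div_rpow hμ.le (by positivity)]
        rw [div_eq_mul_inv]
        congr 1
        rw [← Real.rpow_natCast ‖x - ξ‖ 2, ← Real.rpow_mul (norm_nonneg _),
          ← Real.rpow_neg (norm_nonneg _)]
        norm_num

lemma young_rpow (hN : 5 ≤ N) {a b : ℝ} (ha : 0 < a) (hb : 0 < b) :
    a ^ pexp N * b ≤ a ^ (pexp N + 1) + b ^ (pexp N + 1) := by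
  have hp := pexp_pos hN
  rcases le_total a b with h | h
  · have : a ^ pexp N * b ≤ b ^ (pexp N + 1) := by
      rw [Real.rpow_add_one hb.ne']
      exact mul_le_mul_of_nonneg_right (Real.rpow_le_rpow ha.le h hp.le) hb.le
    linarith [Real.rpow_nonneg ha.le (pexp N + 1)]
  · have : a ^ pexp N * b ≤ a ^ (pexp N + 1) := by
      rw [Real.rpow_add_one ha.ne']
      exact mul_le_mul_of_nonneg_left h (Real.rpow_nonneg ha.le _)
    linarith [Real.rpow_nonneg hb.le (pexp N + 1)]

lemma tail_integral (N : ℕ) (hN : 5 ≤ N) :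
    ∃ K : ℝ, 0 ≤ K ∧ ∀ (c : EuclideanSpace ℝ (Fin N)) (τ : ℝ), 0 < τ →
      ∃ h : EuclideanSpace ℝ (Fin N) → ℝ,
        Integrable h ∧ (∀ x, 0 ≤ h x) ∧
        (∀ x, τ ≤ ‖x - c‖ → ‖x - c‖ ^ (-(2*(N:ℝ))) ≤ h x) ∧
        ∫ x, h x ≤ K * τ ^ (-(N:ℝ)) := by
  classical
  have hNpos : (0:ℝ) < N := by
    have : (5:ℝ) ≤ N := by exact_mod_cast hN
    linarith
  set g : EuclideanSpace ℝ (Fin N) → ℝ :=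
    fun y => if 1 ≤ ‖y‖ then ‖y‖ ^ (-(2*(N:ℝ))) else 0 with hg_def
  have hg_nonneg : ∀ y, 0 ≤ g y := by
    intro y; simp only [hg_def]
    split
    · exact Real.rpow_nonneg (norm_nonneg _) _
    · exact le_refl _
  have hfin : (Module.finrank ℝ (EuclideanSpace ℝ (Fin N)) : ℝ) < 2*(N:ℝ) := by
    rw [finrank_euclideanSpace_fin]; linarith
  have hGint : Integrable
      (fun y : EuclideanSpace ℝ (Fin N) => (2:ℝ)^(2*(N:ℝ)) * (1+‖y‖)^(-(2*(N:ℝ)))) volume :=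
    (integrable_one_add_norm hfin).const_mul _
  have hg_meas : Measurable g := by
    apply Measurable.ite
    · exact measurableSet_le measurable_const measurable_norm
    · fun_prop
    · exact measurable_const
  have hg_int : Integrable g := by
    refine hGint.mono' hg_meas.aestronglyMeasurable (Filter.Eventually.of_forall fun y => ?_)
    rw [Real.norm_eq_abs, abs_of_nonneg (hg_nonneg y)]
    simp only [hg_def]
    split
    · rename_i hy
      have h0 : (0:ℝ) < ‖y‖ := lt_of_lt_of_le one_pos hy
      have h1 : (1+‖y‖) ≤ 2*‖y‖ := by linarith
      have key : (1+‖y‖)^(2*(N:ℝ)) ≤ 2^(2*(N:ℝ)) * ‖y‖^(2*(N:ℝ)) := by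
        rw [← Real.mul_rpow (by norm_num) (norm_nonneg _)]
        exact Real.rpow_le_rpow (by positivity) h1 (by positivity)
      have ha : (0:ℝ) < ‖y‖^(2*(N:ℝ)) := Real.rpow_pos_of_pos h0 _
      have hb : (0:ℝ) < (1+‖y‖)^(2*(N:ℝ)) := Real.rpow_pos_of_pos (by positivity) _
      rw [Real.rpow_neg (norm_nonneg _), Real.rpow_neg (by positivity : (0:ℝ) ≤ 1+‖y‖),
        inv_eq_one_div, inv_eq_one_div, mul_one_div, div_le_div_iff₀ ha hb]
      nlinarith [key]
    · positivity
  have hK0 : 0 ≤ ∫ y, g y := integral_nonneg hg_nonneg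
  refine ⟨∫ y, g y, hK0, fun c τ hτ => ?_⟩
  refine ⟨fun x => τ ^ (-(2*(N:ℝ))) * g (τ⁻¹ • (x - c)), ?_, ?_, ?_, ?_⟩
  · exact ((hg_int.comp_smul (inv_ne_zero hτ.ne')).comp_sub_right c).const_mul _
  · exact fun x => mul_nonneg (Real.rpow_nonneg hτ.le _) (hg_nonneg _)
  · intro x hx
    have hxc : (0:ℝ) < ‖x - c‖ := lt_of_lt_of_le hτ hx
    have hτi : (0:ℝ) < τ⁻¹ := by positivity
    have hnorm : ‖τ⁻¹ • (x - c)‖ = τ⁻¹ * ‖x - c‖ := by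
      rw [norm_smul, Real.norm_eq_abs, abs_of_pos hτi]
    have h1le : 1 ≤ ‖τ⁻¹ • (x - c)‖ := by
      rw [hnorm, ← inv_mul_cancel₀ hτ.ne']
      exact mul_le_mul_of_nonneg_left hx hτi.le
    have heq : τ ^ (-(2*(N:ℝ))) * g (τ⁻¹ • (x - c)) = ‖x - c‖ ^ (-(2*(N:ℝ))) := by
      simp only [hg_def, if_pos h1le, hnorm]
      rw [Real.mul_rpow hτi.le (norm_nonneg _), ← mul_assoc, Real.inv_rpow hτ.le,
        mul_inv_cancel₀ (ne_of_gt (Real.rpow_pos_of_pos hτ _)), one_mul]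
    simp only []
    rw [heq]
  · rw [integral_const_mul]
    have h2 : ∫ x : EuclideanSpace ℝ (Fin N), g (τ⁻¹ • (x - c))
        = ∫ x : EuclideanSpace ℝ (Fin N), g (τ⁻¹ • x) :=
      integral_sub_right_eq_self (fun x => g (τ⁻¹ • x)) c
    have h3 : ∫ x : EuclideanSpace ℝ (Fin N), g (τ⁻¹ • x)
        = τ ^ (Module.finrank ℝ (EuclideanSpace ℝ (Fin N))) • ∫ x, g x :=
      MeasureTheory.Measure.integral_comp_inv_smul_of_nonneg volume g hτ.le
    rw [h2, h3, smul_eq_mul, finrank_euclideanSpace_fin]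
    have h4 : (τ:ℝ) ^ (N:ℕ) = τ ^ ((N:ℝ)) := (Real.rpow_natCast τ N).symm
    rw [h4, ← mul_assoc, ← Real.rpow_add hτ]
    have h5 : -(2*(N:ℝ)) + N = -(N:ℝ) := by ring
    rw [h5, mul_comm]

end auxlemmas

lemma keyq (N k : ℕ) (hN : 5 ≤ N) (hk : 1 ≤ k)
    (ξ₀ : EuclideanSpace ℝ (Fin N)) (d r : ℝ) (hd0 : 0 < d) (hd1 : d < 1) (hr : 0 < r) :
    ∃ ε₀ > (0 : ℝ), ∃ C > (0 : ℝ), ∀ ε : ℝ, 0 < ε → ε < ε₀ →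
      ∀ (μ : ℕ → ℝ) (σ : ℕ → EuclideanSpace ℝ (Fin N)), admissible N k d μ σ →
      ∀ l, 1 ≤ l → l ≤ k → ∀ m, 1 ≤ m → m ≤ k → m ≠ l →
      ∫ x in annulus N k ξ₀ μ r ε l, Ubub N k ξ₀ μ σ ε m x ^ (pexp N + 1)
        ≤ C * ε ^ ((N : ℝ) * theta N k / (2 * (k : ℝ))) := by
  classical
  haveI : Nontrivial (EuclideanSpace ℝ (Fin N)) :=
    Module.nontrivial_of_finrank_pos (R := ℝ) (by rw [finrank_euclideanSpace_fin]; omega)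
  obtain ⟨K, hK0, hKtail⟩ := tail_integral N hN
  have h5 : (5:ℝ) ≤ (N:ℝ) := hN5 hN
  have hN0 : (0:ℝ) ≤ (N:ℝ) := by linarith
  have hk1 : (1:ℝ) ≤ (k:ℝ) := by exact_mod_cast hk
  set t : ℝ := theta N k / (2 * (k:ℝ)) with ht_def
  have hθ : 0 < theta N k := by
    have h3 : (3:ℝ) ≤ (N:ℝ) - 2 := by linarith
    have h6 : (1:ℝ)*3 ≤ (k:ℝ)*((N:ℝ)-2) :=
      mul_le_mul hk1 h3 (by norm_num) (by linarith)
    rw [theta]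
    apply div_pos <;> linarith
  have ht : 0 < t := by
    rw [ht_def]; apply div_pos hθ; linarith
  set mB : ℝ := (volume (ball (0 : EuclideanSpace ℝ (Fin N)) 1)).toReal with hmB_def
  have hmB0 : 0 ≤ mB := ENNReal.toReal_nonneg
  set αq : ℝ := alphaN N ^ (pexp N + 1) with hαq_def
  have hαq0 : 0 ≤ αq := Real.rpow_nonneg (alphaN_pos hN).le _
  set Ca : ℝ := αq * (d ^ (N:ℝ))⁻¹ * ((d ^ (N:ℝ))⁻¹ * mB) with hCa_def
  set Cb : ℝ := αq * (d ^ (N:ℝ))⁻¹ * (K * ((d/2) ^ (N:ℝ))⁻¹) with hCb_def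
  have hdN : (0:ℝ) < d ^ (N:ℝ) := Real.rpow_pos_of_pos hd0 _
  have hd2N : (0:ℝ) < (d/2) ^ (N:ℝ) := Real.rpow_pos_of_pos (by linarith) _
  have hCa0 : 0 ≤ Ca := by
    rw [hCa_def]; positivity
  have hCb0 : 0 ≤ Cb := by
    rw [hCb_def]
    apply mul_nonneg (mul_nonneg hαq0 (by positivity)) (mul_nonneg hK0 (by positivity))
  refine ⟨min 1 ((d^3/2) ^ (t⁻¹ : ℝ)), lt_min one_pos (Real.rpow_pos_of_pos (by positivity) _),
    max Ca Cb + 1, by positivity, ?_⟩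
  intro ε hε hεε₀ μ σ hadm l hl1 hlk m hm1 hmk hml
  have hε1 : ε < 1 := lt_of_lt_of_le hεε₀ (min_le_left _ _)
  have hεd : ε ^ t ≤ d^3/2 := by
    have h1 : ε ≤ (d^3/2) ^ (t⁻¹:ℝ) := le_of_lt (lt_of_lt_of_le hεε₀ (min_le_right _ _))
    calc ε ^ t ≤ ((d^3/2) ^ (t⁻¹:ℝ)) ^ t := Real.rpow_le_rpow hε.le h1 ht.le
      _ = d^3/2 := Real.rpow_inv_rpow (by positivity) ht.ne'
  have hmono : ∀ a b : ℝ, b ≤ a → ε ^ a ≤ ε ^ b := fun a b hba =>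
    Real.rpow_le_rpow_of_exponent_ge hε hε1.le hba
  have hgoal : (N:ℝ) * theta N k / (2*(k:ℝ)) = (N:ℝ) * t := by rw [ht_def]; ring
  rw [hgoal]
  have hεt : ∀ s : ℝ, (0:ℝ) < ε ^ s := fun s => Real.rpow_pos_of_pos hε s
  have hmu : ∀ j, 1 ≤ j → j ≤ k →
      0 < muScaled N k μ ε j ∧ d * ε ^ ((2*(j:ℝ)-1)*t) ≤ muScaled N k μ ε j ∧
        muScaled N k μ ε j ≤ d⁻¹ * ε ^ ((2*(j:ℝ)-1)*t) := by
    intro j hj1 hjk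
    obtain ⟨hμd, hμd', _⟩ := hadm j hj1 hjk
    have hee : (2*(j:ℝ)-1) * theta N k / (2*(k:ℝ)) = (2*(j:ℝ)-1)*t := by rw [ht_def]; ring
    refine ⟨?_, ?_, ?_⟩
    · rw [muScaled, hee]; exact mul_pos (lt_trans hd0 hμd) (hεt _)
    · rw [muScaled, hee]; exact mul_le_mul_of_nonneg_right hμd.le (hεt _).le
    · rw [muScaled, hee]
      have : μ j ≤ d⁻¹ := by rw [inv_eq_one_div]; exact hμd'.le
      exact mul_le_mul_of_nonneg_right this (hεt _).le
  set A := annulus N k ξ₀ μ r ε l with hA_def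
  have hA_meas : MeasurableSet A := by
    rw [hA_def, annulus]; exact measurableSet_ball.diff measurableSet_ball
  obtain ⟨hμm_pos, hμm_low, hμm_high⟩ := hmu m hm1 hmk
  obtain ⟨hμl_pos, hμl_low, hμl_high⟩ := hmu l hl1 hlk
  have hUpos : ∀ x, 0 < Ubub N k ξ₀ μ σ ε m x := fun x => bubble_pos hN hμm_pos _ x
  rcases lt_or_gt_of_ne hml with hcase | hcase
  -- CASE m < l
  · have hl2 : 2 ≤ l := by omega
    have hl1' : l ≠ 1 := by omega
    have hcast : ((l-1 : ℕ):ℝ) = (l:ℝ) - 1 := by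
      rw [Nat.cast_sub hl1, Nat.cast_one]
    obtain ⟨hμlm_pos, hμlm_low, hμlm_high⟩ := hmu (l-1) (by omega) (by omega)
    set em : ℝ := (2*(m:ℝ)-1)*t with hem_def
    set sOut : ℝ := (2*(l:ℝ)-2)*t with hsOut_def
    set Q : ℝ := d⁻¹ * ε ^ sOut with hQ_def
    have hQ0 : 0 < Q := by rw [hQ_def]; positivity
    have hprod : muScaled N k μ ε l * muScaled N k μ ε (l-1) ≤ Q * Q := by
      have e1 : muScaled N k μ ε (l-1) ≤ d⁻¹ * ε ^ ((2*(l:ℝ)-3)*t) := by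
        have h' : (2*((l-1:ℕ):ℝ)-1)*t = (2*(l:ℝ)-3)*t := by rw [hcast]; ring
        rw [← h']; exact hμlm_high
      have hexp : ((2*(l:ℝ)-1)*t) + ((2*(l:ℝ)-3)*t) = sOut + sOut := by
        rw [hsOut_def]; ring
      calc muScaled N k μ ε l * muScaled N k μ ε (l-1)
          ≤ (d⁻¹ * ε^((2*(l:ℝ)-1)*t)) * (d⁻¹ * ε^((2*(l:ℝ)-3)*t)) :=
            mul_le_mul hμl_high e1 hμlm_pos.le (by positivity)
        _ = Q * Q := by
            rw [mul_mul_mul_comm, ← Real.rpow_add hε, hexp, Real.rpow_add hε, hQ_def,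
              mul_mul_mul_comm]
    have hRout : Real.sqrt (muScaled N k μ ε l * muScaled N k μ ε (l-1)) ≤ Q := by
      calc Real.sqrt (muScaled N k μ ε l * muScaled N k μ ε (l-1))
          ≤ Real.sqrt (Q*Q) := Real.sqrt_le_sqrt hprod
        _ = Q := Real.sqrt_mul_self hQ0.le
    have hA_sub : A ⊆ ball ξ₀ Q := by
      rw [hA_def, annulus, if_neg hl1']
      exact Set.diff_subset.trans (ball_subset_ball hRout)
    have hvfin : volume A < ⊤ := lt_of_le_of_lt (measure_mono hA_sub) measure_ball_lt_top
    have hvol : (volume A).toReal ≤ Q ^ (N:ℕ) * mB := by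
      have h2 : volume (ball ξ₀ Q)
          = ENNReal.ofReal (Q ^ Module.finrank ℝ (EuclideanSpace ℝ (Fin N)))
              * volume (ball (0 : EuclideanSpace ℝ (Fin N)) 1) :=
        Measure.addHaar_ball volume ξ₀ hQ0.le
      rw [finrank_euclideanSpace_fin] at h2
      calc (volume A).toReal ≤ (volume (ball ξ₀ Q)).toReal :=
            ENNReal.toReal_mono measure_ball_lt_top.ne (measure_mono hA_sub)
        _ = Q^(N:ℕ) * mB := by
            rw [h2, ENNReal.toReal_mul, ENNReal.toReal_ofReal (by positivity), hmB_def]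
    have hUbd : ∀ x ∈ A, ‖Ubub N k ξ₀ μ σ ε m x ^ (pexp N + 1)‖
        ≤ αq * (muScaled N k μ ε m ^ (N:ℝ))⁻¹ := by
      intro x hx
      rw [Real.norm_eq_abs, abs_of_nonneg (Real.rpow_nonneg (hUpos x).le _)]
      exact bubble_q_le_inv hN hμm_pos _ _
    have hInt1 : ∫ x in A, Ubub N k ξ₀ μ σ ε m x ^ (pexp N + 1)
        ≤ (αq * (muScaled N k μ ε m ^ (N:ℝ))⁻¹) * (volume A).toReal := by
      refine le_trans (le_abs_self _) ?_
      rw [← Real.norm_eq_abs]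
      exact norm_setIntegral_le_of_norm_le_const hvfin hUbd
    have hinv : (muScaled N k μ ε m ^ (N:ℝ))⁻¹ ≤ ((d*ε^em)^(N:ℝ))⁻¹ := by
      apply inv_anti₀ (Real.rpow_pos_of_pos (by positivity) _)
      exact Real.rpow_le_rpow (by positivity) hμm_low hN0
    have hexp_ineq : (N:ℝ)*t ≤ sOut*(N:ℝ) - em*(N:ℝ) := by
      have hml' : (m:ℝ) + 1 ≤ (l:ℝ) := by exact_mod_cast hcase
      have hfac : (0:ℝ) ≤ (2*((l:ℝ)-(m:ℝ)-1))*(t*(N:ℝ)) :=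
        mul_nonneg (by linarith) (mul_nonneg ht.le hN0)
      have hiden : sOut*(N:ℝ) - em*(N:ℝ) - (N:ℝ)*t
          = (2*((l:ℝ)-(m:ℝ)-1))*(t*(N:ℝ)) + 0*t := by
        rw [hsOut_def, hem_def]; ring
      linarith
    have e1 : ((d*ε^em)^(N:ℝ))⁻¹ = (d^(N:ℝ))⁻¹ * ε^(-(em*(N:ℝ))) := by
      rw [Real.mul_rpow hd0.le (Real.rpow_nonneg hε.le _), ← Real.rpow_mul hε.le, mul_inv,
        ← Real.rpow_neg hε.le]
    have e2 : Q^(N:ℕ) = (d^(N:ℝ))⁻¹ * ε^(sOut*(N:ℝ)) := by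
      rw [← Real.rpow_natCast Q N, hQ_def,
        Real.mul_rpow (by positivity) (Real.rpow_nonneg hε.le _), Real.inv_rpow hd0.le,
        ← Real.rpow_mul hε.le]
    calc ∫ x in A, Ubub N k ξ₀ μ σ ε m x ^ (pexp N + 1)
        ≤ (αq * (muScaled N k μ ε m ^ (N:ℝ))⁻¹) * (volume A).toReal := hInt1
      _ ≤ (αq * ((d*ε^em)^(N:ℝ))⁻¹) * (Q^(N:ℕ) * mB) := by
          apply mul_le_mul (mul_le_mul_of_nonneg_left hinv hαq0) hvol ENNReal.toReal_nonneg
          positivity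
      _ = Ca * ε ^ (sOut*(N:ℝ) - em*(N:ℝ)) := by
          rw [e1, e2, hCa_def,
            show sOut*(N:ℝ) - em*(N:ℝ) = -(em*(N:ℝ)) + sOut*(N:ℝ) by ring,
            Real.rpow_add hε]
          ring
      _ ≤ Ca * ε ^ ((N:ℝ)*t) := mul_le_mul_of_nonneg_left (hmono _ _ hexp_ineq) hCa0
      _ ≤ (max Ca Cb + 1) * ε ^ ((N:ℝ)*t) := by
          apply mul_le_mul_of_nonneg_right _ (hεt _).le
          have := le_max_left Ca Cb; linarith
  -- CASE m > l
  · have hlk' : l < k := by omega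
    have hlk'' : l ≠ k := by omega
    obtain ⟨hμlp_pos, hμlp_low, hμlp_high⟩ := hmu (l+1) (by omega) (by omega)
    obtain ⟨_, _, hσm⟩ := hadm m hm1 hmk
    set em : ℝ := (2*(m:ℝ)-1)*t with hem_def
    set sIn : ℝ := (2*(l:ℝ))*t with hsIn_def
    set P : ℝ := d * ε ^ sIn with hP_def
    have hP0 : 0 < P := by rw [hP_def]; positivity
    have hprod : P * P ≤ muScaled N k μ ε l * muScaled N k μ ε (l+1) := by
      have e1 : d * ε ^ ((2*(l:ℝ)+1)*t) ≤ muScaled N k μ ε (l+1) := by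
        have h' : (2*((l+1:ℕ):ℝ)-1)*t = (2*(l:ℝ)+1)*t := by push_cast; ring
        rw [← h']; exact hμlp_low
      have hexp : sIn + sIn = ((2*(l:ℝ)-1)*t) + ((2*(l:ℝ)+1)*t) := by
        rw [hsIn_def]; ring
      calc P * P = (d * ε^((2*(l:ℝ)-1)*t)) * (d * ε^((2*(l:ℝ)+1)*t)) := by
            rw [hP_def, mul_mul_mul_comm, ← Real.rpow_add hε, hexp, Real.rpow_add hε,
              mul_mul_mul_comm]
        _ ≤ muScaled N k μ ε l * muScaled N k μ ε (l+1) :=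
            mul_le_mul hμl_low e1 (by positivity) hμl_pos.le
    have hρ : P ≤ Real.sqrt (muScaled N k μ ε l * muScaled N k μ ε (l+1)) := by
      calc P = Real.sqrt (P*P) := (Real.sqrt_mul_self hP0.le).symm
        _ ≤ _ := Real.sqrt_le_sqrt hprod
    have hml' : (l:ℝ) + 1 ≤ (m:ℝ) := by exact_mod_cast hcase
    have hstep0 : em ≥ sIn + t := by
      have hfac : (0:ℝ) ≤ (2*((m:ℝ)-(l:ℝ)-1))*t := mul_nonneg (by linarith) ht.le
      have hiden : em - (sIn + t) = (2*((m:ℝ)-(l:ℝ)-1))*t := by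
        rw [hem_def, hsIn_def]; ring
      linarith
    set τ : ℝ := d/2 * ε ^ sIn with hτ_def
    have hτ0 : 0 < τ := by rw [hτ_def]; positivity
    have hξdist : ‖xiScaled N k ξ₀ μ σ ε m - ξ₀‖ ≤ d/2 * ε ^ sIn := by
      have hxi : xiScaled N k ξ₀ μ σ ε m - ξ₀ = muScaled N k μ ε m • σ m := by
        rw [xiScaled]; abel
      rw [hxi, norm_smul, Real.norm_eq_abs, abs_of_pos hμm_pos]
      have hσm' : ‖σ m‖ ≤ d⁻¹ := by rw [inv_eq_one_div]; exact hσm.le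
      have hstep : em ≥ sIn + t := hstep0
      calc muScaled N k μ ε m * ‖σ m‖ ≤ (d⁻¹ * ε^em) * d⁻¹ :=
            mul_le_mul hμm_high hσm' (norm_nonneg _) (by positivity)
        _ = d⁻¹ * d⁻¹ * ε^em := by ring
        _ ≤ d⁻¹ * d⁻¹ * (ε^sIn * ε^t) := by
            apply mul_le_mul_of_nonneg_left _ (by positivity)
            rw [← Real.rpow_add hε]
            exact hmono _ _ hstep
        _ ≤ d⁻¹ * d⁻¹ * (ε^sIn * (d^3/2)) := by
            apply mul_le_mul_of_nonneg_left _ (by positivity)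
            exact mul_le_mul_of_nonneg_left hεd (hεt _).le
        _ = d/2 * ε ^ sIn := by field_simp
    have hsub : ∀ x ∈ A, τ ≤ ‖x - xiScaled N k ξ₀ μ σ ε m‖ := by
      intro x hx
      rw [hA_def, annulus, if_neg hlk''] at hx
      have hx2 : x ∉ ball ξ₀ (Real.sqrt (muScaled N k μ ε l * muScaled N k μ ε (l+1))) := hx.2
      have hdist : P ≤ ‖x - ξ₀‖ := by
        rw [mem_ball, dist_eq_norm, not_lt] at hx2
        exact le_trans hρ hx2
      have htri : ‖x - ξ₀‖ - ‖xiScaled N k ξ₀ μ σ ε m - ξ₀‖ ≤ ‖x - xiScaled N k ξ₀ μ σ ε m‖ := by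
        have := norm_sub_norm_le (x - ξ₀) (xiScaled N k ξ₀ μ σ ε m - ξ₀)
        have heq : (x - ξ₀) - (xiScaled N k ξ₀ μ σ ε m - ξ₀) = x - xiScaled N k ξ₀ μ σ ε m := by
          abel
        rw [heq] at this
        exact this
      have : τ = P - d/2 * ε ^ sIn := by rw [hτ_def, hP_def]; ring
      rw [this]
      linarith
    obtain ⟨h, hh_int, hh_nonneg, hh_ge, hh_val⟩ := hKtail (xiScaled N k ξ₀ μ σ ε m) τ hτ0
    have hUb : ∀ x ∈ A, Ubub N k ξ₀ μ σ ε m x ^ (pexp N + 1)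
        ≤ (αq * muScaled N k μ ε m ^ (N:ℝ)) * h x := by
      intro x hx
      have hxτ := hsub x hx
      have hxpos : 0 < ‖x - xiScaled N k ξ₀ μ σ ε m‖ := lt_of_lt_of_le hτ0 hxτ
      calc Ubub N k ξ₀ μ σ ε m x ^ (pexp N + 1)
          ≤ αq * muScaled N k μ ε m ^ (N:ℝ)
              * ‖x - xiScaled N k ξ₀ μ σ ε m‖ ^ (-(2*(N:ℝ))) := by
            rw [hαq_def]; exact bubble_q_le_tail hN hμm_pos hxpos
        _ ≤ (αq * muScaled N k μ ε m ^ (N:ℝ)) * h x := by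
            apply mul_le_mul_of_nonneg_left (hh_ge x hxτ)
            positivity
    have hInt1 : ∫ x in A, Ubub N k ξ₀ μ σ ε m x ^ (pexp N + 1)
        ≤ ∫ x in A, (αq * muScaled N k μ ε m ^ (N:ℝ)) * h x := by
      apply integral_mono_of_nonneg
      · exact Filter.Eventually.of_forall fun x => Real.rpow_nonneg (hUpos x).le _
      · exact (hh_int.const_mul _).integrableOn
      · exact ae_restrict_of_forall_mem hA_meas hUb
    have hInt2 : ∫ x in A, (αq * muScaled N k μ ε m ^ (N:ℝ)) * h x
        ≤ (αq * muScaled N k μ ε m ^ (N:ℝ)) * (K * τ ^ (-(N:ℝ))) := by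
      rw [integral_const_mul]
      apply mul_le_mul_of_nonneg_left _ (by positivity)
      exact le_trans (setIntegral_le_integral hh_int (Filter.Eventually.of_forall hh_nonneg))
        hh_val
    have hμmN : muScaled N k μ ε m ^ (N:ℝ) ≤ (d⁻¹)^(N:ℝ) * ε^(((2*(l:ℝ)+1)*t)*(N:ℝ)) := by
      have h1 : muScaled N k μ ε m ≤ d⁻¹ * ε^((2*(l:ℝ)+1)*t) := by
        refine le_trans hμm_high ?_
        apply mul_le_mul_of_nonneg_left _ (by positivity)
        apply hmono
        have : sIn + t = (2*(l:ℝ)+1)*t := by rw [hsIn_def]; ring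
        linarith [hstep0]
      calc muScaled N k μ ε m ^ (N:ℝ) ≤ (d⁻¹ * ε^((2*(l:ℝ)+1)*t)) ^ (N:ℝ) :=
            Real.rpow_le_rpow hμm_pos.le h1 hN0
        _ = (d⁻¹)^(N:ℝ) * ε^(((2*(l:ℝ)+1)*t)*(N:ℝ)) := by
            rw [Real.mul_rpow (by positivity) (Real.rpow_nonneg hε.le _),
              ← Real.rpow_mul hε.le]
    have hτN : τ ^ (-(N:ℝ)) = ((d/2)^(N:ℝ))⁻¹ * ε^(-(sIn*(N:ℝ))) := by
      rw [hτ_def, Real.rpow_neg (by positivity),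
        Real.mul_rpow (by positivity) (Real.rpow_nonneg hε.le _), ← Real.rpow_mul hε.le,
        mul_inv, ← Real.rpow_neg hε.le]
    have hexp_eq : ((2*(l:ℝ)+1)*t)*(N:ℝ) - sIn*(N:ℝ) = (N:ℝ)*t := by
      rw [hsIn_def]; ring
    calc ∫ x in A, Ubub N k ξ₀ μ σ ε m x ^ (pexp N + 1)
        ≤ (αq * muScaled N k μ ε m ^ (N:ℝ)) * (K * τ ^ (-(N:ℝ))) := le_trans hInt1 hInt2
      _ ≤ (αq * ((d⁻¹)^(N:ℝ) * ε^(((2*(l:ℝ)+1)*t)*(N:ℝ))))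
            * (K * (((d/2)^(N:ℝ))⁻¹ * ε^(-(sIn*(N:ℝ))))) := by
          rw [hτN]
          apply mul_le_mul (mul_le_mul_of_nonneg_left hμmN hαq0) (le_refl _) _ (by positivity)
          apply mul_nonneg hK0 (by positivity)
      _ = Cb * ε ^ ((N:ℝ)*t) := by
          rw [hCb_def, ← hexp_eq,
            show ((2*(l:ℝ)+1)*t)*(N:ℝ) - sIn*(N:ℝ)
              = ((2*(l:ℝ)+1)*t)*(N:ℝ) + (-(sIn*(N:ℝ))) by ring,
            Real.rpow_add hε, Real.inv_rpow hd0.le]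
          ring
      _ ≤ (max Ca Cb + 1) * ε ^ ((N:ℝ)*t) := by
          apply mul_le_mul_of_nonneg_right _ (hεt _).le
          have := le_max_right Ca Cb; linarith

/-- Lemma 6.6, estimate (6.15): `∫_{A_l} U_i^p U_j = O(ε^{Nθ/(2k)})` for `i ≠ l`, `j ≠ l`. -/
theorem statement3 (N k : ℕ) (hN : 5 ≤ N) (hk : 1 ≤ k)
    (ξ₀ : EuclideanSpace ℝ (Fin N)) (d r : ℝ) (hd0 : 0 < d) (hd1 : d < 1) (hr : 0 < r) :
    ∃ ε₀ > (0 : ℝ), ∃ C > (0 : ℝ), ∀ ε : ℝ, 0 < ε → ε < ε₀ →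
      ∀ (μ : ℕ → ℝ) (σ : ℕ → EuclideanSpace ℝ (Fin N)), admissible N k d μ σ →
      ∀ l, 1 ≤ l → l ≤ k → ∀ i, 1 ≤ i → i ≤ k → i ≠ l → ∀ j, 1 ≤ j → j ≤ k → j ≠ l →
      ∫ x in annulus N k ξ₀ μ r ε l,
          Ubub N k ξ₀ μ σ ε i x ^ pexp N * Ubub N k ξ₀ μ σ ε j x
        ≤ C * ε ^ ((N : ℝ) * theta N k / (2 * (k : ℝ))) := by
  obtain ⟨ε₀, hε₀, C, hC, hkey⟩ := keyq N k hN hk ξ₀ d r hd0 hd1 hr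
  refine ⟨ε₀, hε₀, 2*C, by linarith, ?_⟩
  intro ε hε hεε₀ μ σ hadm l hl1 hlk i hi1 hik hil j hj1 hjk hjl
  have hki := hkey ε hε hεε₀ μ σ hadm l hl1 hlk i hi1 hik hil
  have hkj := hkey ε hε hεε₀ μ σ hadm l hl1 hlk j hj1 hjk hjl
  have hμpos : ∀ m, 1 ≤ m → m ≤ k → 0 < muScaled N k μ ε m := by
    intro m hm1 hmk
    obtain ⟨hd', _, _⟩ := hadm m hm1 hmk
    rw [muScaled]
    exact mul_pos (lt_trans hd0 hd') (Real.rpow_pos_of_pos hε _)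
  have hμi := hμpos i hi1 hik
  have hμj := hμpos j hj1 hjk
  have hUipos : ∀ x, 0 < Ubub N k ξ₀ μ σ ε i x := fun x => bubble_pos hN hμi _ x
  have hUjpos : ∀ x, 0 < Ubub N k ξ₀ μ σ ε j x := fun x => bubble_pos hN hμj _ x
  set A := annulus N k ξ₀ μ r ε l with hA_def
  have hA_meas : MeasurableSet A := by
    rw [hA_def, annulus]; exact measurableSet_ball.diff measurableSet_ball
  have hA_fin : volume A ≠ ⊤ := by
    have hsub : A ⊆ ball ξ₀
        (if l = 1 then r else Real.sqrt (muScaled N k μ ε l * muScaled N k μ ε (l - 1))) := by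
      rw [hA_def, annulus]; exact Set.diff_subset
    exact (lt_of_le_of_lt (measure_mono hsub) measure_ball_lt_top).ne
  have hInt : ∀ m, 1 ≤ m → m ≤ k →
      IntegrableOn (fun x => Ubub N k ξ₀ μ σ ε m x ^ (pexp N + 1)) A volume := by
    intro m hm1 hmk
    have hμm := hμpos m hm1 hmk
    apply Measure.integrableOn_of_bounded hA_fin
    · exact ((bubble_continuous hμm _).rpow_const
        (fun x => Or.inl (bubble_pos hN hμm _ x).ne')).aestronglyMeasurable
    · refine Filter.Eventually.of_forall fun x => ?_
      simp only [Ubub]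
      rw [Real.norm_eq_abs, abs_of_nonneg (Real.rpow_nonneg (bubble_pos hN hμm _ x).le _)]
      exact bubble_q_le_inv hN hμm _ _
  have hIi := hInt i hi1 hik
  have hIj := hInt j hj1 hjk
  have hmono1 : ∫ x in A, Ubub N k ξ₀ μ σ ε i x ^ pexp N * Ubub N k ξ₀ μ σ ε j x
      ≤ ∫ x in A, (Ubub N k ξ₀ μ σ ε i x ^ (pexp N + 1)
          + Ubub N k ξ₀ μ σ ε j x ^ (pexp N + 1)) := by
    apply integral_mono_of_nonneg
    · exact Filter.Eventually.of_forall fun x =>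
        mul_nonneg (Real.rpow_nonneg (hUipos x).le _) (hUjpos x).le
    · exact hIi.add hIj
    · exact ae_restrict_of_forall_mem hA_meas fun x _ =>
        young_rpow hN (hUipos x) (hUjpos x)
  have hadd : ∫ x in A, (Ubub N k ξ₀ μ σ ε i x ^ (pexp N + 1)
        + Ubub N k ξ₀ μ σ ε j x ^ (pexp N + 1))
      = (∫ x in A, Ubub N k ξ₀ μ σ ε i x ^ (pexp N + 1))
        + ∫ x in A, Ubub N k ξ₀ μ σ ε j x ^ (pexp N + 1) := integral_add hIi hIj
  calc ∫ x in A, Ubub N k ξ₀ μ σ ε i x ^ pexp N * Ubub N k ξ₀ μ σ ε j x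
      ≤ (∫ x in A, Ubub N k ξ₀ μ σ ε i x ^ (pexp N + 1))
        + ∫ x in A, Ubub N k ξ₀ μ σ ε j x ^ (pexp N + 1) := by rw [← hadd]; exact hmono1
    _ ≤ C * ε ^ ((N : ℝ) * theta N k / (2 * (k : ℝ)))
        + C * ε ^ ((N : ℝ) * theta N k / (2 * (k : ℝ))) := add_le_add hki hkj
    _ = 2*C * ε ^ ((N : ℝ) * theta N k / (2 * (k : ℝ))) := by ring
end

section
/- There exist ε₀ > 0 and C > 0 (depending only on N, k, d, r, ξ₀) such that for every ε ∈ (0,ε₀), every admissible (μ,σ), every l ∈ {1,…,k} and every j ∈ {1,…,k} with j ≠ l, one has ∫_{A_l} U_l(x)^p U_j(x) dx ≤ C ε^{(N-4)|l-j|θ/(2k)}. -/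
open MeasureTheory Metric

/-!
Write `m = (N-4)/2`. For `j < l` the flatter bubble is bounded, `U_j ≤ α_N μ_{jε}^{-m}`, while
`∫ U_l^p = α_N^p μ_{lε}^m ∫ (1+|y|²)^{-(N+4)/2}`, so the interaction is `O((μ_{lε}/μ_{jε})^m)`.
For `l < j` the points of `A_l` stay at distance `ρ = √(μ_{lε}μ_{(l+1)ε})` from `ξ₀`, whereas the
centre `ξ_{jε}` lies within `ρ/2` of `ξ₀` once `ε` is small. Hence `U_j(x) ≲ μ_{jε}^m |x-ξ₀|^{4-N}`
on `A_l`, and rescaling by `μ_{lε}` turns `∫ U_l^p |x-ξ₀|^{4-N}` into `μ_{lε}^{-m}` times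
`∫ (1+|y-σ_l|²)^{-(N+4)/2} |y|^{4-N} dy`, which is bounded uniformly in `σ_l` because `|y|^{4-N}` is
locally integrable. In both cases `(μ_{aε}/μ_{bε})^m` with `a - b = |l-j|` is
`O(ε^{(N-4)|l-j|θ/(2k)})`.
-/

open Real Module

theorem one_add_norm_sub_sq_rpow_mul_norm_rpow_le_indicator_add {E : Type*}
    [NormedAddCommGroup E] {r a : ℝ} (hr : 0 ≤ r) (ha : 0 ≤ a) (σ y : E) :
    (1 + ‖y - σ‖ ^ 2) ^ (-r / 2) * ‖y‖ ^ (-a)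
      ≤ (closedBall (0 : E) 1).indicator (fun y => ‖y‖ ^ (-a)) y
        + (1 + ‖y - σ‖ ^ 2) ^ (-r / 2) := by
  have hbump₀ : 0 ≤ (1 + ‖y - σ‖ ^ 2) ^ (-r / 2) := rpow_nonneg (by positivity) _
  by_cases hy : ‖y‖ ≤ 1
  · have hbump : (1 + ‖y - σ‖ ^ 2) ^ (-r / 2) ≤ 1 :=
      rpow_le_one_of_one_le_of_nonpos (by nlinarith [sq_nonneg ‖y - σ‖]) (by linarith)
    rw [Set.indicator_of_mem (mem_closedBall_zero_iff.2 hy)]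
    calc (1 + ‖y - σ‖ ^ 2) ^ (-r / 2) * ‖y‖ ^ (-a) ≤ 1 * ‖y‖ ^ (-a) :=
          mul_le_mul_of_nonneg_right hbump (by positivity)
      _ ≤ ‖y‖ ^ (-a) + (1 + ‖y - σ‖ ^ 2) ^ (-r / 2) := by linarith
  · have hpow : ‖y‖ ^ (-a) ≤ 1 := rpow_le_one_of_one_le_of_nonpos (by linarith) (by linarith)
    have hind : 0 ≤ (closedBall (0 : E) 1).indicator (fun y => ‖y‖ ^ (-a)) y :=
      Set.indicator_nonneg (fun z _ => rpow_nonneg (norm_nonneg z) _) y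
    calc (1 + ‖y - σ‖ ^ 2) ^ (-r / 2) * ‖y‖ ^ (-a) ≤ (1 + ‖y - σ‖ ^ 2) ^ (-r / 2) * 1 :=
          mul_le_mul_of_nonneg_left hpow hbump₀
      _ ≤ _ := by linarith

section Weights

variable {E : Type*} [NormedAddCommGroup E] [NormedSpace ℝ E] [FiniteDimensional ℝ E]
  [MeasurableSpace E] [BorelSpace E] {μ : Measure E} [μ.IsAddHaarMeasure]

theorem integral_comp_inv_smul_sub {F : Type*} [NormedAddCommGroup F] [NormedSpace ℝ F]
    (g : E → F) {c : ℝ} (hc : 0 ≤ c) (ξ : E) :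
    ∫ x, g (c⁻¹ • (x - ξ)) ∂μ = c ^ finrank ℝ E • ∫ y, g y ∂μ := by
  rw [integral_sub_right_eq_self (fun z => g (c⁻¹ • z)) ξ,
    Measure.integral_comp_inv_smul_of_nonneg μ g hc]

theorem integrableOn_closedBall_norm_rpow_neg {a : ℝ} (ha₀ : 0 ≤ a) (ha : a < finrank ℝ E)
    (R : ℝ) : IntegrableOn (fun y : E => ‖y‖ ^ (-a)) (closedBall 0 R) μ := by
  have hdim : 1 ≤ finrank ℝ E := by exact_mod_cast (ha₀.trans_lt ha)
  refine (locallyIntegrable_of_norm_le_rpow hdim (C := 1) ha ?_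
    (Measurable.aestronglyMeasurable (by fun_prop))).integrableOn_isCompact
    (isCompact_closedBall 0 R)
  filter_upwards with y
  rw [one_mul, norm_of_nonneg (by positivity)]

theorem integrable_one_add_norm_sub_sq_rpow_mul_norm_rpow {r a : ℝ} (hr : (finrank ℝ E : ℝ) < r)
    (ha₀ : 0 ≤ a) (ha : a < finrank ℝ E) (σ : E) :
    Integrable (fun y => (1 + ‖y - σ‖ ^ 2) ^ (-r / 2) * ‖y‖ ^ (-a)) μ := by
  have hdom : Integrable (fun y => (closedBall (0 : E) 1).indicator (fun y => ‖y‖ ^ (-a)) y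
      + (1 + ‖y - σ‖ ^ 2) ^ (-r / 2)) μ :=
    ((integrableOn_closedBall_norm_rpow_neg ha₀ ha 1).integrable_indicator
      measurableSet_closedBall).add ((integrable_rpow_neg_one_add_norm_sq hr).comp_sub_right σ)
  refine hdom.mono' (Measurable.aestronglyMeasurable (by fun_prop))
    (Filter.Eventually.of_forall fun y => ?_)
  rw [norm_of_nonneg (by positivity)]
  exact one_add_norm_sub_sq_rpow_mul_norm_rpow_le_indicator_add
    (by linarith [(finrank ℝ E).cast_nonneg (α := ℝ)]) ha₀ σ y

theorem integral_one_add_norm_sub_sq_rpow_mul_norm_rpow_le {r a : ℝ}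
    (hr : (finrank ℝ E : ℝ) < r) (ha₀ : 0 ≤ a) (ha : a < finrank ℝ E) (σ : E) :
    ∫ y, (1 + ‖y - σ‖ ^ 2) ^ (-r / 2) * ‖y‖ ^ (-a) ∂μ
      ≤ (∫ y in closedBall 0 1, ‖y‖ ^ (-a) ∂μ) + ∫ y, (1 + ‖y‖ ^ 2) ^ (-r / 2) ∂μ := by
  have hball := integrableOn_closedBall_norm_rpow_neg (μ := μ) ha₀ ha 1
  have hbump := (integrable_rpow_neg_one_add_norm_sq (μ := μ) hr).comp_sub_right σ
  calc ∫ y, (1 + ‖y - σ‖ ^ 2) ^ (-r / 2) * ‖y‖ ^ (-a) ∂μ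
      ≤ ∫ y, (closedBall (0 : E) 1).indicator (fun y => ‖y‖ ^ (-a)) y
          + (1 + ‖y - σ‖ ^ 2) ^ (-r / 2) ∂μ :=
        integral_mono (integrable_one_add_norm_sub_sq_rpow_mul_norm_rpow hr ha₀ ha σ)
          ((hball.integrable_indicator measurableSet_closedBall).add hbump)
          fun y => one_add_norm_sub_sq_rpow_mul_norm_rpow_le_indicator_add
            (by linarith [(finrank ℝ E).cast_nonneg (α := ℝ)]) ha₀ σ y
    _ = _ := by
        rw [integral_add (hball.integrable_indicator measurableSet_closedBall) hbump,
          integral_indicator measurableSet_closedBall,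
          integral_sub_right_eq_self (fun y => (1 + ‖y‖ ^ 2) ^ (-r / 2)) σ]

end Weights

section Bubble

variable {N : ℕ} {μ ν : ℝ} {ξ η x : EuclideanSpace ℝ (Fin N)}

theorem alphaN_nonneg (hN : 4 ≤ N) : 0 ≤ alphaN N := by
  have hN' : (4 : ℝ) ≤ N := by exact_mod_cast hN
  exact rpow_nonneg (mul_nonneg (mul_nonneg (mul_nonneg (by linarith) (by linarith))
    (by linarith)) (by linarith)) _

theorem bubble_nonneg (hN : 4 ≤ N) (hμ : 0 ≤ μ) : 0 ≤ bubble N μ ξ x :=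
  mul_nonneg (alphaN_nonneg hN) (rpow_nonneg (by positivity) _)

theorem bubble_rpow_pexp (hN : 4 < N) (hμ : 0 < μ) :
    bubble N μ ξ x ^ pexp N = alphaN N ^ pexp N * μ ^ (-((N : ℝ) + 4) / 2)
      * (1 + ‖μ⁻¹ • (x - ξ)‖ ^ 2) ^ (-((N : ℝ) + 4) / 2) := by
  have hN' : (4 : ℝ) < N := by exact_mod_cast hN
  have hbase : μ / (μ ^ 2 + ‖x - ξ‖ ^ 2) = μ⁻¹ * (1 + ‖μ⁻¹ • (x - ξ)‖ ^ 2)⁻¹ := by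
    rw [norm_smul, norm_inv, norm_of_nonneg hμ.le]
    field_simp
  have hexp : ((N : ℝ) - 4) / 2 * pexp N = ((N : ℝ) + 4) / 2 := by
    have : (N : ℝ) - 4 ≠ 0 := by linarith
    rw [pexp]
    field_simp
  rw [bubble, mul_rpow (alphaN_nonneg hN.le) (rpow_nonneg (by positivity) _),
    ← rpow_mul (by positivity), hexp, hbase, mul_rpow (by positivity) (by positivity),
    inv_rpow hμ.le, inv_rpow (by positivity), ← rpow_neg hμ.le, ← rpow_neg (by positivity),
    neg_div, mul_assoc]

theorem bubble_le (hN : 4 ≤ N) (hμ : 0 < μ) :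
    bubble N μ ξ x ≤ alphaN N * μ⁻¹ ^ (((N : ℝ) - 4) / 2) := by
  have hN' : (4 : ℝ) ≤ N := by exact_mod_cast hN
  have hbase : μ / (μ ^ 2 + ‖x - ξ‖ ^ 2) ≤ μ⁻¹ := by
    rw [div_le_iff₀ (by positivity)]
    field_simp
    nlinarith [sq_nonneg ‖x - ξ‖]
  exact mul_le_mul_of_nonneg_left (rpow_le_rpow (by positivity) hbase (by linarith))
    (alphaN_nonneg hN)

theorem bubble_le_mul_norm_rpow (hN : 4 ≤ N) (hμ : 0 ≤ μ) (hx : x ≠ ξ) :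
    bubble N μ ξ x ≤ alphaN N * μ ^ (((N : ℝ) - 4) / 2) * ‖x - ξ‖ ^ (-((N : ℝ) - 4)) := by
  have hN' : (4 : ℝ) ≤ N := by exact_mod_cast hN
  have ht : 0 < ‖x - ξ‖ := norm_pos_iff.2 (sub_ne_zero.2 hx)
  have hbase : μ / (μ ^ 2 + ‖x - ξ‖ ^ 2) ≤ μ / ‖x - ξ‖ ^ 2 :=
    div_le_div_of_nonneg_left hμ (by positivity) (by nlinarith)
  have hsplit : (μ / ‖x - ξ‖ ^ 2) ^ (((N : ℝ) - 4) / 2)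
      = μ ^ (((N : ℝ) - 4) / 2) * ‖x - ξ‖ ^ (-((N : ℝ) - 4)) := by
    have h2 : ((2 : ℕ) : ℝ) * (((N : ℝ) - 4) / 2) = (N : ℝ) - 4 := by push_cast; ring
    rw [div_rpow hμ (by positivity), ← rpow_natCast, ← rpow_mul ht.le, h2, rpow_neg ht.le,
      div_eq_mul_inv]
  rw [bubble, mul_assoc, ← hsplit]
  exact mul_le_mul_of_nonneg_left (rpow_le_rpow (by positivity) hbase (by linarith))
    (alphaN_nonneg hN)

theorem bubble_le_of_two_mul_norm_le (hN : 4 ≤ N) (hν : 0 ≤ ν) (hx : x ≠ ξ)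
    (hη : 2 * ‖η - ξ‖ ≤ ‖x - ξ‖) :
    bubble N ν η x ≤ alphaN N * 2 ^ ((N : ℝ) - 4) * ν ^ (((N : ℝ) - 4) / 2)
      * ‖x - ξ‖ ^ (-((N : ℝ) - 4)) := by
  have hN' : (4 : ℝ) ≤ N := by exact_mod_cast hN
  have ht : 0 < ‖x - ξ‖ := norm_pos_iff.2 (sub_ne_zero.2 hx)
  have hfar : ‖x - ξ‖ / 2 ≤ ‖x - η‖ := by
    have := norm_sub_norm_le (x - ξ) (η - ξ)
    rw [sub_sub_sub_cancel_right] at this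
    linarith
  have hxη : x ≠ η := sub_ne_zero.1 (norm_pos_iff.1 (by linarith))
  calc bubble N ν η x ≤ alphaN N * ν ^ (((N : ℝ) - 4) / 2) * ‖x - η‖ ^ (-((N : ℝ) - 4)) :=
        bubble_le_mul_norm_rpow hN hν hxη
    _ ≤ alphaN N * ν ^ (((N : ℝ) - 4) / 2) * (‖x - ξ‖ / 2) ^ (-((N : ℝ) - 4)) := by
        have := alphaN_nonneg hN
        exact mul_le_mul_of_nonneg_left
          (rpow_le_rpow_of_nonpos (by positivity) hfar (by linarith)) (by positivity)
    _ = _ := by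
        rw [div_rpow ht.le zero_le_two, rpow_neg zero_le_two, div_inv_eq_mul]
        ring

theorem integrable_bubble_rpow_pexp (hN : 4 < N) (hμ : 0 < μ) :
    Integrable (fun x => bubble N μ ξ x ^ pexp N) := by
  have hN' : (4 : ℝ) < N := by exact_mod_cast hN
  have hprofile := integrable_rpow_neg_one_add_norm_sq
    (μ := (volume : Measure (EuclideanSpace ℝ (Fin N)))) (r := N + 4) (by simp)
  simp_rw [bubble_rpow_pexp hN hμ]
  exact ((hprofile.comp_smul (inv_ne_zero hμ.ne')).comp_sub_right ξ).const_mul _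

theorem integral_bubble_rpow_pexp (hN : 4 < N) (hμ : 0 < μ) :
    ∫ x, bubble N μ ξ x ^ pexp N = alphaN N ^ pexp N * μ ^ (((N : ℝ) - 4) / 2)
      * ∫ y : EuclideanSpace ℝ (Fin N), (1 + ‖y‖ ^ 2) ^ (-((N : ℝ) + 4) / 2) := by
  have hscale : μ ^ (-((N : ℝ) + 4) / 2) * μ ^ N = μ ^ (((N : ℝ) - 4) / 2) := by
    rw [← rpow_natCast, ← rpow_add hμ]
    congr 1
    ring
  simp_rw [bubble_rpow_pexp hN hμ]
  rw [integral_const_mul, integral_comp_inv_smul_sub (fun y => (1 + ‖y‖ ^ 2) ^ (-((N : ℝ) + 4) / 2))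
    hμ.le, finrank_euclideanSpace_fin, smul_eq_mul, ← mul_assoc, mul_assoc _ _ (μ ^ N), hscale]

theorem bubble_rpow_pexp_mul_norm_rpow (hN : 4 < N) (hμ : 0 < μ) (σ : EuclideanSpace ℝ (Fin N)) :
    bubble N μ (ξ + μ • σ) x ^ pexp N * ‖x - ξ‖ ^ (-((N : ℝ) - 4))
      = alphaN N ^ pexp N * (μ ^ (-((N : ℝ) + 4) / 2) * μ ^ (-((N : ℝ) - 4)))
        * ((1 + ‖μ⁻¹ • (x - ξ) - σ‖ ^ 2) ^ (-((N : ℝ) + 4) / 2)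
          * ‖μ⁻¹ • (x - ξ)‖ ^ (-((N : ℝ) - 4))) := by
  have hcenter : μ⁻¹ • (x - (ξ + μ • σ)) = μ⁻¹ • (x - ξ) - σ := by
    rw [sub_add_eq_sub_sub, smul_sub, smul_smul, inv_mul_cancel₀ hμ.ne', one_smul]
  have hnorm : ‖x - ξ‖ = μ * ‖μ⁻¹ • (x - ξ)‖ := by
    rw [norm_smul, norm_inv, norm_of_nonneg hμ.le, mul_inv_cancel_left₀ hμ.ne']
  rw [bubble_rpow_pexp hN hμ, hcenter, hnorm, mul_rpow hμ.le (norm_nonneg _)]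
  ring

theorem integrable_bubble_rpow_pexp_mul_norm_rpow (hN : 4 < N) (hμ : 0 < μ)
    (σ : EuclideanSpace ℝ (Fin N)) :
    Integrable (fun x => bubble N μ (ξ + μ • σ) x ^ pexp N * ‖x - ξ‖ ^ (-((N : ℝ) - 4))) := by
  have hN' : (4 : ℝ) < N := by exact_mod_cast hN
  have hG := integrable_one_add_norm_sub_sq_rpow_mul_norm_rpow
    (μ := (volume : Measure (EuclideanSpace ℝ (Fin N)))) (r := N + 4) (a := N - 4)
    (by simp) (by linarith) (by simp) σ
  simp_rw [bubble_rpow_pexp_mul_norm_rpow hN hμ σ]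
  exact ((hG.comp_smul (inv_ne_zero hμ.ne')).comp_sub_right ξ).const_mul _

theorem integral_bubble_rpow_pexp_mul_norm_rpow_le (hN : 4 < N) (hμ : 0 < μ)
    (σ : EuclideanSpace ℝ (Fin N)) :
    ∫ x, bubble N μ (ξ + μ • σ) x ^ pexp N * ‖x - ξ‖ ^ (-((N : ℝ) - 4))
      ≤ alphaN N ^ pexp N * μ⁻¹ ^ (((N : ℝ) - 4) / 2)
        * ((∫ y in closedBall (0 : EuclideanSpace ℝ (Fin N)) 1, ‖y‖ ^ (-((N : ℝ) - 4)))
          + ∫ y : EuclideanSpace ℝ (Fin N), (1 + ‖y‖ ^ 2) ^ (-((N : ℝ) + 4) / 2)) := by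
  have hN' : (4 : ℝ) < N := by exact_mod_cast hN
  have hG := integral_one_add_norm_sub_sq_rpow_mul_norm_rpow_le
    (μ := (volume : Measure (EuclideanSpace ℝ (Fin N)))) (r := N + 4) (a := N - 4)
    (by simp) (by linarith) (by simp) σ
  have hscale : μ ^ (-((N : ℝ) + 4) / 2) * μ ^ (-((N : ℝ) - 4)) * μ ^ N
      = μ⁻¹ ^ (((N : ℝ) - 4) / 2) := by
    rw [← rpow_natCast, ← rpow_add hμ, ← rpow_add hμ, inv_rpow hμ.le, ← rpow_neg hμ.le]
    congr 1
    ring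
  simp_rw [bubble_rpow_pexp_mul_norm_rpow hN hμ σ]
  rw [integral_const_mul, integral_comp_inv_smul_sub
    (fun y => (1 + ‖y - σ‖ ^ 2) ^ (-((N : ℝ) + 4) / 2) * ‖y‖ ^ (-((N : ℝ) - 4))) hμ.le,
    finrank_euclideanSpace_fin, smul_eq_mul, ← mul_assoc, mul_assoc _ _ (μ ^ N), hscale]
  have := alphaN_nonneg hN.le
  exact mul_le_mul_of_nonneg_left hG (by positivity)

theorem setIntegral_bubble_rpow_pexp_mul_bubble_le (hN : 4 < N) (hμ : 0 < μ) (hν : 0 < ν)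
    (s : Set (EuclideanSpace ℝ (Fin N))) :
    ∫ x in s, bubble N μ ξ x ^ pexp N * bubble N ν η x
      ≤ alphaN N ^ pexp N * alphaN N
        * (∫ y : EuclideanSpace ℝ (Fin N), (1 + ‖y‖ ^ 2) ^ (-((N : ℝ) + 4) / 2))
        * (μ / ν) ^ (((N : ℝ) - 4) / 2) := by
  set c := alphaN N * ν⁻¹ ^ (((N : ℝ) - 4) / 2)
  have hUp := integrable_bubble_rpow_pexp hN hμ (ξ := ξ)
  have hUp₀ : ∀ x, 0 ≤ bubble N μ ξ x ^ pexp N :=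
    fun x => rpow_nonneg (bubble_nonneg hN.le hμ.le) _
  have hc : 0 ≤ c := mul_nonneg (alphaN_nonneg hN.le) (by positivity)
  calc ∫ x in s, bubble N μ ξ x ^ pexp N * bubble N ν η x
      ≤ ∫ x in s, bubble N μ ξ x ^ pexp N * c :=
        integral_mono_of_nonneg
          (ae_of_all _ fun x => mul_nonneg (hUp₀ x) (bubble_nonneg hN.le hν.le))
          (hUp.mul_const c).integrableOn
          (ae_of_all _ fun x => mul_le_mul_of_nonneg_left (bubble_le hN.le hν) (hUp₀ x))
    _ ≤ ∫ x, bubble N μ ξ x ^ pexp N * c :=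
        setIntegral_le_integral (hUp.mul_const c) (ae_of_all _ fun x => mul_nonneg (hUp₀ x) hc)
    _ = _ := by
        rw [integral_mul_const, integral_bubble_rpow_pexp hN hμ, div_eq_mul_inv μ ν,
          mul_rpow hμ.le (by positivity)]
        ring

theorem setIntegral_bubble_rpow_pexp_mul_bubble_le_of_subset_compl_ball (hN : 4 < N) (hμ : 0 < μ)
    (hν : 0 < ν) (σ : EuclideanSpace ℝ (Fin N)) {ρ : ℝ} (hρ : 0 < ρ) (hη : ‖η - ξ‖ ≤ ρ / 2)
    {s : Set (EuclideanSpace ℝ (Fin N))} (hs : MeasurableSet s) (hsρ : s ⊆ (ball ξ ρ)ᶜ) :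
    ∫ x in s, bubble N μ (ξ + μ • σ) x ^ pexp N * bubble N ν η x
      ≤ alphaN N ^ pexp N * alphaN N * 2 ^ ((N : ℝ) - 4)
        * ((∫ y in closedBall (0 : EuclideanSpace ℝ (Fin N)) 1, ‖y‖ ^ (-((N : ℝ) - 4)))
          + ∫ y : EuclideanSpace ℝ (Fin N), (1 + ‖y‖ ^ 2) ^ (-((N : ℝ) + 4) / 2))
        * (ν / μ) ^ (((N : ℝ) - 4) / 2) := by
  set c := alphaN N * 2 ^ ((N : ℝ) - 4) * ν ^ (((N : ℝ) - 4) / 2)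
  set f := fun x => bubble N μ (ξ + μ • σ) x ^ pexp N * ‖x - ξ‖ ^ (-((N : ℝ) - 4))
  have hf := integrable_bubble_rpow_pexp_mul_norm_rpow hN hμ σ (ξ := ξ)
  have hUp₀ : ∀ x, 0 ≤ bubble N μ (ξ + μ • σ) x ^ pexp N :=
    fun x => rpow_nonneg (bubble_nonneg hN.le hμ.le) _
  have hfc₀ : ∀ x, 0 ≤ f x * c := fun x => by
    have := alphaN_nonneg hN.le
    have := hUp₀ x
    positivity
  have hpt : ∀ x ∈ s, bubble N μ (ξ + μ • σ) x ^ pexp N * bubble N ν η x ≤ f x * c := by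
    intro x hx
    have hρx : ρ ≤ ‖x - ξ‖ := by simpa [dist_eq_norm] using hsρ hx
    have hUj := bubble_le_of_two_mul_norm_le hN.le hν.le
      (sub_ne_zero.1 (norm_pos_iff.1 (hρ.trans_le hρx))) (by linarith : 2 * ‖η - ξ‖ ≤ _)
    calc _ ≤ bubble N μ (ξ + μ • σ) x ^ pexp N * (c * ‖x - ξ‖ ^ (-((N : ℝ) - 4))) :=
          mul_le_mul_of_nonneg_left hUj (hUp₀ x)
      _ = f x * c := by ring
  calc ∫ x in s, bubble N μ (ξ + μ • σ) x ^ pexp N * bubble N ν η x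
      ≤ ∫ x in s, f x * c :=
        integral_mono_of_nonneg
          (ae_of_all _ fun x => mul_nonneg (hUp₀ x) (bubble_nonneg hN.le hν.le))
          (hf.mul_const c).integrableOn ((ae_restrict_mem hs).mono hpt)
    _ ≤ ∫ x, f x * c := setIntegral_le_integral (hf.mul_const c) (ae_of_all _ hfc₀)
    _ ≤ alphaN N ^ pexp N * μ⁻¹ ^ (((N : ℝ) - 4) / 2)
        * ((∫ y in closedBall (0 : EuclideanSpace ℝ (Fin N)) 1, ‖y‖ ^ (-((N : ℝ) - 4)))
          + ∫ y : EuclideanSpace ℝ (Fin N), (1 + ‖y‖ ^ 2) ^ (-((N : ℝ) + 4) / 2)) * c := by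
        rw [integral_mul_const]
        exact mul_le_mul_of_nonneg_right (integral_bubble_rpow_pexp_mul_norm_rpow_le hN hμ σ)
          (by have := alphaN_nonneg hN.le; positivity)
    _ = _ := by
        rw [div_eq_mul_inv ν μ, mul_rpow hν.le (by positivity)]
        ring

end Bubble

section ScaledParameters

variable {N k : ℕ} {d ε : ℝ} {μ : ℕ → ℝ} {σ : ℕ → EuclideanSpace ℝ (Fin N)}

theorem theta_pos (hN : 4 ≤ N) (hk : 1 ≤ k) : 0 < theta N k := by
  have hN' : (4 : ℝ) ≤ N := by exact_mod_cast hN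
  have hk' : (1 : ℝ) ≤ k := by exact_mod_cast hk
  exact div_pos (by nlinarith) (by nlinarith)

theorem muScaled_pos (hd : 0 ≤ d) (hadm : admissible N k d μ σ) (hε : 0 < ε) {i : ℕ}
    (hi : 1 ≤ i) (hik : i ≤ k) : 0 < muScaled N k μ ε i :=
  mul_pos (hd.trans_lt (hadm i hi hik).1) (rpow_pos_of_pos hε _)

theorem muScaled_div_rpow_le (hN : 4 ≤ N) (hd : 0 < d) (hadm : admissible N k d μ σ) (hε : 0 < ε)
    {a b : ℕ} (ha : 1 ≤ a) (hak : a ≤ k) (hb : 1 ≤ b) (hbk : b ≤ k) :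
    (muScaled N k μ ε a / muScaled N k μ ε b) ^ (((N : ℝ) - 4) / 2)
      ≤ (d ^ 2)⁻¹ ^ (((N : ℝ) - 4) / 2)
        * ε ^ (((N : ℝ) - 4) * ((a : ℝ) - b) * theta N k / (2 * k)) := by
  have hN' : (4 : ℝ) ≤ N := by exact_mod_cast hN
  obtain ⟨hda, haub, -⟩ := hadm a ha hak
  obtain ⟨hdb, -, -⟩ := hadm b hb hbk
  have hratio : μ a / μ b ≤ (d ^ 2)⁻¹ :=
    (div_le_div₀ (by positivity) haub.le hd hdb.le).trans_eq (by field_simp)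
  have hratio₀ : 0 ≤ μ a / μ b := (div_pos (hd.trans hda) (hd.trans hdb)).le
  rw [muScaled, muScaled, mul_div_mul_comm, ← rpow_sub hε,
    mul_rpow hratio₀ (by positivity), ← rpow_mul hε.le]
  refine mul_le_mul (rpow_le_rpow hratio₀ hratio (by linarith)) (le_of_eq ?_)
    (by positivity) (by positivity)
  congr 1
  ring

theorem muScaled_succ_eq_mul_pow (hε : 0 ≤ ε) (i : ℕ) :
    muScaled N k μ ε (i + 1) = μ (i + 1) * (ε ^ (theta N k / (2 * k))) ^ (2 * i + 1) := by
  rw [muScaled, ← rpow_natCast, ← rpow_mul hε]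
  congr 2
  push_cast
  ring

theorem muScaled_mul_norm_le_half_sqrt (hd : 0 < d) (hd1 : d < 1) (hadm : admissible N k d μ σ)
    (hε : 0 < ε) (hsmall : ε ^ (theta N k / (2 * k)) ≤ d ^ 3 / 2) {l j : ℕ} (hl : 1 ≤ l)
    (hlj : l < j) (hjk : j ≤ k) :
    muScaled N k μ ε j * ‖σ j‖ ≤ √(muScaled N k μ ε l * muScaled N k μ ε (l + 1)) / 2 := by
  obtain ⟨hdl, -, -⟩ := hadm l hl (by omega)
  obtain ⟨hdl', -, -⟩ := hadm (l + 1) (by omega) (by omega)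
  obtain ⟨-, hμj, hσj⟩ := hadm j (by omega) hjk
  set t := ε ^ (theta N k / (2 * k))
  have ht0 : 0 ≤ t := by positivity
  have ht1 : t ≤ 1 := hsmall.trans (by nlinarith [pow_lt_one₀ hd.le hd1 (n := 3) (by norm_num)])
  obtain ⟨l, rfl⟩ := Nat.exists_eq_add_of_le' hl
  obtain ⟨j, rfl⟩ := Nat.exists_eq_add_of_le' (hl.trans hlj.le)
  rw [muScaled_succ_eq_mul_pow hε.le, muScaled_succ_eq_mul_pow hε.le,
    muScaled_succ_eq_mul_pow hε.le]
  have hsq : μ (l + 1) * t ^ (2 * l + 1) * (μ (l + 1 + 1) * t ^ (2 * (l + 1) + 1))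
      = μ (l + 1) * μ (l + 1 + 1) * (t ^ (2 * l + 2)) ^ 2 := by ring
  have hd_le : d ≤ √(μ (l + 1) * μ (l + 1 + 1)) := le_sqrt_of_sq_le (by nlinarith)
  rw [hsq, sqrt_mul (by nlinarith), sqrt_sq (by positivity)]
  calc μ (j + 1) * t ^ (2 * j + 1) * ‖σ (j + 1)‖
      ≤ (1 / d) * t ^ (2 * l + 3) * (1 / d) :=
        mul_le_mul (mul_le_mul hμj.le (pow_le_pow_of_le_one ht0 ht1 (by omega)) (by positivity)
          (by positivity)) hσj.le (norm_nonneg _) (by positivity)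
    _ = d⁻¹ * d⁻¹ * t * t ^ (2 * l + 2) := by ring
    _ ≤ d⁻¹ * d⁻¹ * (d ^ 3 / 2) * t ^ (2 * l + 2) := by gcongr
    _ = d * t ^ (2 * l + 2) / 2 := by field_simp
    _ ≤ √(μ (l + 1) * μ (l + 1 + 1)) * t ^ (2 * l + 2) / 2 := by gcongr

noncomputable def interactionConst (N : ℕ) : ℝ :=
  max (alphaN N ^ pexp N * alphaN N
      * ∫ y : EuclideanSpace ℝ (Fin N), (1 + ‖y‖ ^ 2) ^ (-((N : ℝ) + 4) / 2))
    (alphaN N ^ pexp N * alphaN N * 2 ^ ((N : ℝ) - 4)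
      * ((∫ y in closedBall (0 : EuclideanSpace ℝ (Fin N)) 1, ‖y‖ ^ (-((N : ℝ) - 4)))
        + ∫ y : EuclideanSpace ℝ (Fin N), (1 + ‖y‖ ^ 2) ^ (-((N : ℝ) + 4) / 2)))

theorem interactionConst_nonneg (hN : 4 ≤ N) : 0 ≤ interactionConst N := by
  have := alphaN_nonneg hN
  exact le_max_of_le_left (mul_nonneg (by positivity) (integral_nonneg fun y => by positivity))

theorem setIntegral_annulus_Ubub_rpow_pexp_mul_Ubub_le {ξ₀ : EuclideanSpace ℝ (Fin N)} {r : ℝ}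
    (hN : 4 < N) (hd : 0 < d) (hd1 : d < 1) (hadm : admissible N k d μ σ) (hε : 0 < ε)
    (hsmall : ε ^ (theta N k / (2 * k)) ≤ d ^ 3 / 2) {l j : ℕ} (hl : 1 ≤ l) (hlk : l ≤ k)
    (hj : 1 ≤ j) (hjk : j ≤ k) (hjl : j ≠ l) :
    ∫ x in annulus N k ξ₀ μ r ε l, Ubub N k ξ₀ μ σ ε l x ^ pexp N * Ubub N k ξ₀ μ σ ε j x
      ≤ interactionConst N
        * (muScaled N k μ ε (max l j) / muScaled N k μ ε (min l j)) ^ (((N : ℝ) - 4) / 2) := by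
  have hμl := muScaled_pos hd.le hadm hε hl hlk
  have hμj := muScaled_pos hd.le hadm hε hj hjk
  rcases hjl.lt_or_gt with hjl | hlj
  · rw [max_eq_left hjl.le, min_eq_right hjl.le]
    exact (setIntegral_bubble_rpow_pexp_mul_bubble_le hN hμl hμj _).trans
      (mul_le_mul_of_nonneg_right (le_max_left _ _) (by positivity))
  · have hμl' := muScaled_pos hd.le hadm hε (i := l + 1) (by omega) (by omega)
    have hξj : ‖xiScaled N k ξ₀ μ σ ε j - ξ₀‖
        ≤ √(muScaled N k μ ε l * muScaled N k μ ε (l + 1)) / 2 := by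
      rw [xiScaled, add_sub_cancel_left, norm_smul, norm_of_nonneg hμj.le]
      exact muScaled_mul_norm_le_half_sqrt hd hd1 hadm hε hsmall hl hlj hjk
    have hannulus : annulus N k ξ₀ μ r ε l
        ⊆ (ball ξ₀ √(muScaled N k μ ε l * muScaled N k μ ε (l + 1)))ᶜ := by
      rw [annulus, if_neg (show l ≠ k by omega)]
      exact Set.sdiff_subset_compl _ _
    rw [max_eq_right hlj.le, min_eq_left hlj.le]
    exact (setIntegral_bubble_rpow_pexp_mul_bubble_le_of_subset_compl_ball hN hμl hμj (σ l)
      (sqrt_pos.2 (mul_pos hμl hμl')) hξj (measurableSet_ball.diff measurableSet_ball)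
      hannulus).trans (mul_le_mul_of_nonneg_right (le_max_right _ _) (by positivity))

end ScaledParameters

theorem statement4_general (N k : ℕ) (hN : 5 ≤ N) (hk : 1 ≤ k)
    (ξ₀ : EuclideanSpace ℝ (Fin N)) (d r : ℝ) (hd0 : 0 < d) (hd1 : d < 1) :
    ∃ ε₀ > (0 : ℝ), ∃ C > (0 : ℝ), ∀ ε : ℝ, 0 < ε → ε < ε₀ →
      ∀ (μ : ℕ → ℝ) (σ : ℕ → EuclideanSpace ℝ (Fin N)), admissible N k d μ σ →
      ∀ l, 1 ≤ l → l ≤ k → ∀ j, 1 ≤ j → j ≤ k → j ≠ l →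
      ∫ x in annulus N k ξ₀ μ r ε l,
          Ubub N k ξ₀ μ σ ε l x ^ pexp N * Ubub N k ξ₀ μ σ ε j x
        ≤ C * ε ^ (((N : ℝ) - 4) * |(l : ℝ) - (j : ℝ)| * theta N k / (2 * (k : ℝ))) := by
  set τ := theta N k / (2 * k)
  set D := (d ^ 2)⁻¹ ^ (((N : ℝ) - 4) / 2)
  have hK := interactionConst_nonneg (N := N) (by omega)
  have hτ : 0 < τ := div_pos (theta_pos (by omega) hk) (by positivity)
  refine ⟨(d ^ 3 / 2) ^ τ⁻¹, by positivity, interactionConst N * D + 1, by positivity, ?_⟩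
  intro ε hε hεε₀ μ σ hadm l hl hlk j hj hjk hjl
  have hsmall : ε ^ τ ≤ d ^ 3 / 2 :=
    calc ε ^ τ ≤ ((d ^ 3 / 2) ^ τ⁻¹) ^ τ := rpow_le_rpow hε.le hεε₀.le hτ.le
      _ = d ^ 3 / 2 := by rw [← rpow_mul (by positivity), inv_mul_cancel₀ hτ.ne', rpow_one]
  have hdist : |(l : ℝ) - j| = ((max l j : ℕ) : ℝ) - (min l j : ℕ) := by
    rw [Nat.cast_max, Nat.cast_min, max_sub_min_eq_abs']
  calc _ ≤ interactionConst N
        * (muScaled N k μ ε (max l j) / muScaled N k μ ε (min l j)) ^ (((N : ℝ) - 4) / 2) :=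
        setIntegral_annulus_Ubub_rpow_pexp_mul_Ubub_le hN hd0 hd1 hadm hε hsmall hl hlk hj hjk hjl
    _ ≤ interactionConst N * (D * ε ^ (((N : ℝ) - 4) * |(l : ℝ) - j| * theta N k / (2 * k))) := by
        rw [hdist]
        exact mul_le_mul_of_nonneg_left (muScaled_div_rpow_le (by omega) hd0 hadm hε
          (le_max_of_le_left hl) (max_le hlk hjk) (le_min hl hj) (min_le_of_left_le hlk)) hK
    _ ≤ _ := by
        rw [← mul_assoc]
        exact mul_le_mul_of_nonneg_right (by linarith) (by positivity)

/-- Lemma 6.6, estimate (6.16): `∫_{A_l} U_l^p U_j = O(ε^{(N-4)|l-j|θ/(2k)})` for `j ≠ l`. -/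
theorem statement4 (N k : ℕ) (hN : 5 ≤ N) (hk : 1 ≤ k)
    (ξ₀ : EuclideanSpace ℝ (Fin N)) (d r : ℝ) (hd0 : 0 < d) (hd1 : d < 1) (hr : 0 < r) :
    ∃ ε₀ > (0 : ℝ), ∃ C > (0 : ℝ), ∀ ε : ℝ, 0 < ε → ε < ε₀ →
      ∀ (μ : ℕ → ℝ) (σ : ℕ → EuclideanSpace ℝ (Fin N)), admissible N k d μ σ →
      ∀ l, 1 ≤ l → l ≤ k → ∀ j, 1 ≤ j → j ≤ k → j ≠ l →
      ∫ x in annulus N k ξ₀ μ r ε l,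
          Ubub N k ξ₀ μ σ ε l x ^ pexp N * Ubub N k ξ₀ μ σ ε j x
        ≤ C * ε ^ (((N : ℝ) - 4) * |(l : ℝ) - (j : ℝ)| * theta N k / (2 * (k : ℝ))) :=
  statement4_general N k hN hk ξ₀ d r hd0 hd1
end
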